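/- arXiv:1711.04349 — 2 statements merged into one kernel-verified Lean document; each statement's English description precedes it below -/
import Mathlib

section
/- Assume N ≥ 4. Under the permutation null distribution, E(R_{1,(u)}) = |Ḡ| · p₁, E(R_{2,(u)}) = |Ḡ| · q₁, Var(R_{1,(u)}) = (p₁ − p₃)|Ḡ| + (p₂ − p₃) ∑_{i ∈ Fin N} deg_{Ḡ}(i)(deg_{Ḡ}(i) − 1) + (p₃ − p₁²)|Ḡ|², and Var(R_{2,(u)}) is given by the same formula with q₁, q₂, q₃ in place of p₁, p₂, p₃. -/
/-!
Write `R(S) = ∑_{e ∈ Ḡ} 1[e ⊆ S]`. A fixed `k`-set lies in a uniform random `n`-subset of an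
`N`-set with probability `C(n,k)/C(N,k) = n⋯(n-k+1) / (N⋯(N-k+1))`, which gives `E R` at once and
`E R² = ∑_{e,f} P(e ∪ f ⊆ S)`, where `|e ∪ f|` is `2`, `3` or `4` according as `e = f`, `e ≠ f`
share a vertex, or are disjoint. The ordered pairs of distinct edges sharing a vertex number
`∑ deg(i)(deg(i) - 1)`. Finally `R₂(S) = R₁(Sᶜ)`, and the complement of a uniform `n₁`-subset is a
uniform `n₂`-subset.
-/

open Finset
open scoped Classical

noncomputable section

def inclusionProb (N n k : ℕ) : ℝ := (n.choose k : ℝ) / N.choose k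

theorem inclusionProb_eq_prod (N n k : ℕ) :
    inclusionProb N n k = (∏ j ∈ range k, ((n : ℝ) - j)) / ∏ j ∈ range k, ((N : ℝ) - j) := by
  rw [inclusionProb, Nat.cast_choose_eq_descPochhammer_div, Nat.cast_choose_eq_descPochhammer_div,
    div_div_div_cancel_right₀ (by positivity), descPochhammer_eval_eq_prod_range,
    descPochhammer_eval_eq_prod_range]

theorem inclusionProb_two (N n : ℕ) :
    inclusionProb N n 2 = (n : ℝ) * ((n : ℝ) - 1) / ((N : ℝ) * ((N : ℝ) - 1)) := by
  simp [inclusionProb_eq_prod, prod_range_succ]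

theorem inclusionProb_three (N n : ℕ) :
    inclusionProb N n 3 = (n : ℝ) * ((n : ℝ) - 1) * ((n : ℝ) - 2) /
      ((N : ℝ) * ((N : ℝ) - 1) * ((N : ℝ) - 2)) := by
  simp [inclusionProb_eq_prod, prod_range_succ]

theorem inclusionProb_four (N n : ℕ) :
    inclusionProb N n 4 = (n : ℝ) * ((n : ℝ) - 1) * ((n : ℝ) - 2) * ((n : ℝ) - 3) /
      ((N : ℝ) * ((N : ℝ) - 1) * ((N : ℝ) - 2) * ((N : ℝ) - 3)) := by
  simp [inclusionProb_eq_prod, prod_range_succ]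

section UniformSubset

variable {α : Type*} [Fintype α]

def subsetMean (n : ℕ) (f : Finset α → ℝ) : ℝ :=
  (∑ S ∈ powersetCard n univ, f S) / (Fintype.card α).choose n

def subsetVariance (n : ℕ) (f : Finset α → ℝ) : ℝ :=
  subsetMean n fun S => (f S - subsetMean n f) ^ 2

theorem subsetMean_indicator_subset [DecidableEq α] {n : ℕ} (hn : n ≤ Fintype.card α)
    (T : Finset α) :
    subsetMean n (fun S => if T ⊆ S then 1 else 0) = inclusionProb (Fintype.card α) n #T := by
  have hn₀ : ((Fintype.card α).choose n : ℝ) ≠ 0 := by exact_mod_cast (Nat.choose_pos hn).ne'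
  have hT₀ : ((Fintype.card α).choose #T : ℝ) ≠ 0 := by
    exact_mod_cast (Nat.choose_pos (card_le_univ T)).ne'
  rw [subsetMean, inclusionProb, sum_boole, div_eq_div_iff hn₀ hT₀]
  by_cases hTn : #T ≤ n
  · have hcount := card_filter_powersetCard_subset T univ n (subset_univ T) hTn
    rw [card_univ] at hcount
    rw [hcount]
    norm_cast
    rw [mul_comm, ← Nat.choose_mul (n := Fintype.card α) hTn, mul_comm]
  · have hempty : {S ∈ powersetCard n (univ : Finset α) | T ⊆ S} = ∅ :=
      filter_false_of_mem fun S hS hTS =>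
        hTn ((card_le_card hTS).trans (mem_powersetCard.1 hS).2.le)
    rw [hempty, Nat.choose_eq_zero_of_lt (not_le.1 hTn)]
    simp

theorem subsetMean_sum {ι : Type*} (n : ℕ) (s : Finset ι) (f : ι → Finset α → ℝ) :
    subsetMean n (fun S => ∑ i ∈ s, f i S) = ∑ i ∈ s, subsetMean n (f i) := by
  simp only [subsetMean, sum_div]
  exact sum_comm

theorem subsetVariance_eq {n : ℕ} (hn : n ≤ Fintype.card α) (f : Finset α → ℝ) :
    subsetVariance n f = subsetMean n (fun S => f S ^ 2) - subsetMean n f ^ 2 := by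
  have hn₀ : ((Fintype.card α).choose n : ℝ) ≠ 0 := by exact_mod_cast (Nat.choose_pos hn).ne'
  rw [subsetVariance]
  set c := subsetMean n f with hc
  simp only [subsetMean] at hc ⊢
  simp only [sub_sq, sum_add_distrib, sum_sub_distrib, ← mul_sum, ← sum_mul, sum_const,
    card_powersetCard, card_univ, nsmul_eq_mul]
  rw [hc]
  field_simp
  ring

theorem subsetMean_compl [DecidableEq α] {n : ℕ} (hn : n ≤ Fintype.card α) (f : Finset α → ℝ) :
    subsetMean n (fun S => f Sᶜ) = subsetMean (Fintype.card α - n) f := by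
  rw [subsetMean, subsetMean, Nat.choose_symm hn]
  congr 1
  refine sum_nbij' compl compl (fun S hS => ?_) (fun S hS => ?_) (fun S _ => compl_compl S)
    (fun S _ => compl_compl S) (fun S _ => rfl)
  · simp_all [card_compl]
  · simp_all [card_compl]
    omega

theorem subsetVariance_compl [DecidableEq α] {n : ℕ} (hn : n ≤ Fintype.card α)
    (f : Finset α → ℝ) :
    subsetVariance n (fun S => f Sᶜ) = subsetVariance (Fintype.card α - n) f := by
  rw [subsetVariance, subsetMean_compl hn f]
  exact subsetMean_compl hn fun S => (f S - _) ^ 2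

end UniformSubset

theorem Sym2.toFinset_injective {α : Type*} [DecidableEq α] :
    Function.Injective (Sym2.toFinset : Sym2 α → Finset α) := fun e f h =>
  Sym2.ext fun x => by rw [← Sym2.mem_toFinset, h, Sym2.mem_toFinset]

theorem Sym2.apply_card_union_toFinset {α : Type*} [DecidableEq α] (g : ℕ → ℝ) {e f : Sym2 α}
    (he : ¬e.IsDiag) (hf : ¬f.IsDiag) :
    g #(e.toFinset ∪ f.toFinset) = g 4 + (g 3 - g 4) * #(e.toFinset ∩ f.toFinset)
      + (g 2 - 2 * g 3 + g 4) * if e = f then 1 else 0 := by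
  have hunion : #(e.toFinset ∪ f.toFinset) + #(e.toFinset ∩ f.toFinset) = 4 := by
    rw [card_union_add_card_inter, Sym2.card_toFinset_of_not_isDiag e he,
      Sym2.card_toFinset_of_not_isDiag f hf]
  by_cases hef : e = f
  · subst hef
    rw [union_self, inter_self, Sym2.card_toFinset_of_not_isDiag e he]
    simp only [if_true]
    push_cast
    ring
  · have hinter : #(e.toFinset ∩ f.toFinset) ≤ 1 := by
      by_contra! h
      have h₁ := eq_of_subset_of_card_le (inter_subset_left : e.toFinset ∩ f.toFinset ⊆ _)
        (by rw [Sym2.card_toFinset_of_not_isDiag e he]; omega)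
      have h₂ := eq_of_subset_of_card_le (inter_subset_right : e.toFinset ∩ f.toFinset ⊆ _)
        (by rw [Sym2.card_toFinset_of_not_isDiag f hf]; omega)
      exact hef (Sym2.toFinset_injective (h₁.symm.trans h₂))
    interval_cases h : #(e.toFinset ∩ f.toFinset)
    · rw [show #(e.toFinset ∪ f.toFinset) = 4 by omega]
      simp [hef]
    · rw [show #(e.toFinset ∪ f.toFinset) = 3 by omega]
      simp [hef]

section Moments

variable {α : Type*} [Fintype α] [DecidableEq α] (G : SimpleGraph α) [DecidableRel G.Adj]
  {n : ℕ}

theorem SimpleGraph.sum_ite_mem_edgeFinset_eq_degree (i : α) :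
    ∑ e ∈ G.edgeFinset, (if i ∈ e then 1 else 0 : ℝ) = G.degree i := by
  rw [sum_boole, ← G.incidenceFinset_eq_filter, G.card_incidenceFinset_eq_degree]

theorem SimpleGraph.sum_sum_card_inter_toFinset :
    ∑ e ∈ G.edgeFinset, ∑ f ∈ G.edgeFinset, (#(e.toFinset ∩ f.toFinset) : ℝ)
      = ∑ i, (G.degree i : ℝ) ^ 2 := by
  have hinter : ∀ e f : Sym2 α, (#(e.toFinset ∩ f.toFinset) : ℝ)
      = ∑ i, (if i ∈ e then 1 else 0 : ℝ) * (if i ∈ f then 1 else 0) := by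
    intro e f
    simp only [ite_zero_mul_ite_zero, mul_one, sum_boole]
    congr 2
    ext i
    simp
  simp only [hinter, ← G.sum_ite_mem_edgeFinset_eq_degree, sq, sum_mul_sum]
  exact (sum_congr rfl fun e _ => sum_comm).trans sum_comm

theorem SimpleGraph.subsetMean_card_edges_within (hn : n ≤ Fintype.card α) :
    subsetMean n (fun S => (#{e ∈ G.edgeFinset | e.toFinset ⊆ S} : ℝ))
      = #G.edgeFinset * inclusionProb (Fintype.card α) n 2 := by
  simp only [natCast_card_filter, subsetMean_sum, subsetMean_indicator_subset hn]
  rw [sum_congr rfl fun e he => by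
    rw [Sym2.card_toFinset_of_not_isDiag e (G.not_isDiag_of_mem_edgeSet (mem_edgeFinset.1 he))],
    sum_const, nsmul_eq_mul]

theorem SimpleGraph.subsetMean_card_edges_within_sq (hn : n ≤ Fintype.card α) :
    subsetMean n (fun S => (#{e ∈ G.edgeFinset | e.toFinset ⊆ S} : ℝ) ^ 2)
      = inclusionProb (Fintype.card α) n 4 * #G.edgeFinset ^ 2
        + (inclusionProb (Fintype.card α) n 3 - inclusionProb (Fintype.card α) n 4)
          * ∑ i, (G.degree i : ℝ) ^ 2
        + (inclusionProb (Fintype.card α) n 2 - 2 * inclusionProb (Fintype.card α) n 3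
          + inclusionProb (Fintype.card α) n 4) * #G.edgeFinset := by
  have hsq (S : Finset α) : (#{e ∈ G.edgeFinset | e.toFinset ⊆ S} : ℝ) ^ 2
      = ∑ e ∈ G.edgeFinset, ∑ f ∈ G.edgeFinset,
          if e.toFinset ∪ f.toFinset ⊆ S then 1 else 0 := by
    simp only [natCast_card_filter, sq, sum_mul_sum, ite_zero_mul_ite_zero, mul_one,
      union_subset_iff]
  have hdiag {e : Sym2 α} (he : e ∈ G.edgeFinset) : ¬e.IsDiag :=
    G.not_isDiag_of_mem_edgeSet (mem_edgeFinset.1 he)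
  simp only [hsq, subsetMean_sum, subsetMean_indicator_subset hn]
  rw [sum_congr rfl fun e he => sum_congr rfl fun f hf =>
    Sym2.apply_card_union_toFinset _ (hdiag he) (hdiag hf)]
  simp only [sum_add_distrib, ← mul_sum, sum_const, nsmul_eq_mul, sum_ite_eq, sum_ite_mem,
    inter_self, G.sum_sum_card_inter_toFinset, mul_one]
  ring

theorem SimpleGraph.subsetVariance_card_edges_within (hn : n ≤ Fintype.card α) :
    subsetVariance n (fun S => (#{e ∈ G.edgeFinset | e.toFinset ⊆ S} : ℝ))
      = (inclusionProb (Fintype.card α) n 2 - inclusionProb (Fintype.card α) n 4)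
          * #G.edgeFinset
        + (inclusionProb (Fintype.card α) n 3 - inclusionProb (Fintype.card α) n 4)
          * ∑ i, (G.degree i : ℝ) * ((G.degree i : ℝ) - 1)
        + (inclusionProb (Fintype.card α) n 4 - inclusionProb (Fintype.card α) n 2 ^ 2)
          * #G.edgeFinset ^ 2 := by
  have handshake : ∑ i, (G.degree i : ℝ) ^ 2
      = ∑ i, (G.degree i : ℝ) * ((G.degree i : ℝ) - 1) + 2 * #G.edgeFinset := by
    have h := congrArg (Nat.cast : ℕ → ℝ) G.sum_degrees_eq_twice_card_edges
    push_cast at h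
    rw [← h, ← sum_add_distrib]
    exact sum_congr rfl fun i _ => by ring
  rw [subsetVariance_eq hn, G.subsetMean_card_edges_within_sq hn,
    G.subsetMean_card_edges_within hn, handshake]
  ring

end Moments

theorem mean_variance_R1u_R2u_general
    -- total sample size
    (N : ℕ)
    -- sizes of sample 1 and sample 2
    (n₁ n₂ : ℕ) (hn₁' : n₁ ≤ N - 1) (hn₂ : n₂ = N - n₁)
    -- expectation under the permutation null distribution (uniform over
    -- all `n₁`-element subsets of `Fin N`)
    (E : (Finset (Fin N) → ℝ) → ℝ)
    (hE : ∀ f, E f =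
      (∑ S ∈ Finset.powersetCard n₁ (Finset.univ : Finset (Fin N)), f S) / (N.choose n₁ : ℝ))
    -- the union graph Ḡ on the observations
    (Gbar : SimpleGraph (Fin N))
    -- the union statistics: edge-counts within sample 1 and within sample 2
    (R1u : Finset (Fin N) → ℝ)
    (hR1u : ∀ S, R1u S =
      ((Gbar.edgeFinset.filter (fun e => ∀ x ∈ e, x ∈ S)).card : ℝ))
    (R2u : Finset (Fin N) → ℝ)
    (hR2u : ∀ S, R2u S =
      ((Gbar.edgeFinset.filter (fun e => ∀ x ∈ e, x ∉ S)).card : ℝ))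
    -- variance under the permutation null distribution
    (Var : (Finset (Fin N) → ℝ) → ℝ)
    (hVar : ∀ f, Var f = E (fun S => (f S - E f) ^ 2))
    -- the constants p₁, p₂, p₃, q₁, q₂, q₃
    (p₁ p₂ p₃ q₁ q₂ q₃ : ℝ)
    (hp₁ : p₁ = (n₁ : ℝ) * ((n₁ : ℝ) - 1) / ((N : ℝ) * ((N : ℝ) - 1)))
    (hp₂ : p₂ = (n₁ : ℝ) * ((n₁ : ℝ) - 1) * ((n₁ : ℝ) - 2) /
      ((N : ℝ) * ((N : ℝ) - 1) * ((N : ℝ) - 2)))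
    (hp₃ : p₃ = (n₁ : ℝ) * ((n₁ : ℝ) - 1) * ((n₁ : ℝ) - 2) * ((n₁ : ℝ) - 3) /
      ((N : ℝ) * ((N : ℝ) - 1) * ((N : ℝ) - 2) * ((N : ℝ) - 3)))
    (hq₁ : q₁ = (n₂ : ℝ) * ((n₂ : ℝ) - 1) / ((N : ℝ) * ((N : ℝ) - 1)))
    (hq₂ : q₂ = (n₂ : ℝ) * ((n₂ : ℝ) - 1) * ((n₂ : ℝ) - 2) /
      ((N : ℝ) * ((N : ℝ) - 1) * ((N : ℝ) - 2)))
    (hq₃ : q₃ = (n₂ : ℝ) * ((n₂ : ℝ) - 1) * ((n₂ : ℝ) - 2) * ((n₂ : ℝ) - 3) /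
      ((N : ℝ) * ((N : ℝ) - 1) * ((N : ℝ) - 2) * ((N : ℝ) - 3)))
    :
    E R1u = (Gbar.edgeFinset.card : ℝ) * p₁ ∧
    E R2u = (Gbar.edgeFinset.card : ℝ) * q₁ ∧
    Var R1u = (p₁ - p₃) * (Gbar.edgeFinset.card : ℝ)
      + (p₂ - p₃) * (∑ i, (Gbar.degree i : ℝ) * ((Gbar.degree i : ℝ) - 1))
      + (p₃ - p₁ ^ 2) * (Gbar.edgeFinset.card : ℝ) ^ 2 ∧
    Var R2u = (q₁ - q₃) * (Gbar.edgeFinset.card : ℝ)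
      + (q₂ - q₃) * (∑ i, (Gbar.degree i : ℝ) * ((Gbar.degree i : ℝ) - 1))
      + (q₃ - q₁ ^ 2) * (Gbar.edgeFinset.card : ℝ) ^ 2 := by
  have hn₁N : n₁ ≤ Fintype.card (Fin N) := by rw [Fintype.card_fin]; omega
  have hE' : E = subsetMean n₁ := funext fun f => by rw [hE, subsetMean, Fintype.card_fin]
  have hVar' : Var = subsetVariance n₁ := funext fun f => by rw [hVar, hE', subsetVariance]
  have hR1 : R1u = fun S => (#{e ∈ Gbar.edgeFinset | e.toFinset ⊆ S} : ℝ) :=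
    funext fun S => by simp only [hR1u, subset_iff, Sym2.mem_toFinset]
  have hR2 : R2u = fun S => R1u Sᶜ := funext fun S => by
    simp only [hR1, hR2u, subset_iff, Sym2.mem_toFinset, mem_compl]
  rw [hE', hVar', hR2, subsetMean_compl hn₁N, subsetVariance_compl hn₁N, hR1,
    Gbar.subsetMean_card_edges_within hn₁N, Gbar.subsetVariance_card_edges_within hn₁N,
    Gbar.subsetMean_card_edges_within (Nat.sub_le _ _),
    Gbar.subsetVariance_card_edges_within (Nat.sub_le _ _)]
  simp only [Fintype.card_fin, ← hn₂, inclusionProb_two, inclusionProb_three, inclusionProb_four,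
    hp₁, hp₂, hp₃, hq₁, hq₂, hq₃, and_self]

/-- **part of Lemma 5 of the paper.**  Means and variances of the
union within-sample edge-counts under the permutation null distribution. -/
theorem mean_variance_R1u_R2u
    -- number of distinct values and multiplicities
    (K : ℕ) (hK : 1 ≤ K) (m : Fin K → ℕ) (hm : ∀ u, 1 ≤ m u)
    -- total sample size
    (N : ℕ) (hN : N = ∑ u, m u) (hNge : 4 ≤ N)
    -- value map with prescribed fiber sizes
    (v : Fin N → Fin K)
    (hv : ∀ u, (Finset.univ.filter (fun i => v i = u)).card = m u)
    -- similarity graph on the distinct values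
    (C₀ : SimpleGraph (Fin K))
    -- sizes of sample 1 and sample 2
    (n₁ n₂ : ℕ) (hn₁ : 1 ≤ n₁) (hn₁' : n₁ ≤ N - 1) (hn₂ : n₂ = N - n₁)
    -- expectation under the permutation null distribution (uniform over
    -- all `n₁`-element subsets of `Fin N`)
    (E : (Finset (Fin N) → ℝ) → ℝ)
    (hE : ∀ f, E f =
      (∑ S ∈ Finset.powersetCard n₁ (Finset.univ : Finset (Fin N)), f S) / (N.choose n₁ : ℝ))
    -- the union graph Ḡ on the observations
    (Gbar : SimpleGraph (Fin N))
    (hGbar : ∀ i j, Gbar.Adj i j ↔ i ≠ j ∧ (v i = v j ∨ C₀.Adj (v i) (v j)))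
    -- the union statistics: edge-counts within sample 1 and within sample 2
    (R1u : Finset (Fin N) → ℝ)
    (hR1u : ∀ S, R1u S =
      ((Gbar.edgeFinset.filter (fun e => ∀ x ∈ e, x ∈ S)).card : ℝ))
    (R2u : Finset (Fin N) → ℝ)
    (hR2u : ∀ S, R2u S =
      ((Gbar.edgeFinset.filter (fun e => ∀ x ∈ e, x ∉ S)).card : ℝ))
    -- variance under the permutation null distribution
    (Var : (Finset (Fin N) → ℝ) → ℝ)
    (hVar : ∀ f, Var f = E (fun S => (f S - E f) ^ 2))
    -- the constants p₁, p₂, p₃, q₁, q₂, q₃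
    (p₁ p₂ p₃ q₁ q₂ q₃ : ℝ)
    (hp₁ : p₁ = (n₁ : ℝ) * ((n₁ : ℝ) - 1) / ((N : ℝ) * ((N : ℝ) - 1)))
    (hp₂ : p₂ = (n₁ : ℝ) * ((n₁ : ℝ) - 1) * ((n₁ : ℝ) - 2) /
      ((N : ℝ) * ((N : ℝ) - 1) * ((N : ℝ) - 2)))
    (hp₃ : p₃ = (n₁ : ℝ) * ((n₁ : ℝ) - 1) * ((n₁ : ℝ) - 2) * ((n₁ : ℝ) - 3) /
      ((N : ℝ) * ((N : ℝ) - 1) * ((N : ℝ) - 2) * ((N : ℝ) - 3)))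
    (hq₁ : q₁ = (n₂ : ℝ) * ((n₂ : ℝ) - 1) / ((N : ℝ) * ((N : ℝ) - 1)))
    (hq₂ : q₂ = (n₂ : ℝ) * ((n₂ : ℝ) - 1) * ((n₂ : ℝ) - 2) /
      ((N : ℝ) * ((N : ℝ) - 1) * ((N : ℝ) - 2)))
    (hq₃ : q₃ = (n₂ : ℝ) * ((n₂ : ℝ) - 1) * ((n₂ : ℝ) - 2) * ((n₂ : ℝ) - 3) /
      ((N : ℝ) * ((N : ℝ) - 1) * ((N : ℝ) - 2) * ((N : ℝ) - 3)))
    :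
    E R1u = (Gbar.edgeFinset.card : ℝ) * p₁ ∧
    E R2u = (Gbar.edgeFinset.card : ℝ) * q₁ ∧
    Var R1u = (p₁ - p₃) * (Gbar.edgeFinset.card : ℝ)
      + (p₂ - p₃) * (∑ i, (Gbar.degree i : ℝ) * ((Gbar.degree i : ℝ) - 1))
      + (p₃ - p₁ ^ 2) * (Gbar.edgeFinset.card : ℝ) ^ 2 ∧
    Var R2u = (q₁ - q₃) * (Gbar.edgeFinset.card : ℝ)
      + (q₂ - q₃) * (∑ i, (Gbar.degree i : ℝ) * ((Gbar.degree i : ℝ) - 1))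
      + (q₃ - q₁ ^ 2) * (Gbar.edgeFinset.card : ℝ) ^ 2 :=
  mean_variance_R1u_R2u_general N n₁ n₂ hn₁' hn₂ E hE Gbar R1u hR1u R2u hR2u Var hVar p₁ p₂ p₃ q₁ q₂
    q₃ hp₁ hp₂ hp₃ hq₁ hq₂ hq₃
end
end

section
/- Assume N ≥ 4. Under the permutation null distribution, Cov(R_{1,(u)}, R_{2,(u)}) = f₁ · ( |Ḡ|² − |Ḡ| − ∑_{i ∈ Fin N} deg_{Ḡ}(i)(deg_{Ḡ}(i) − 1) ) − p₁q₁ |Ḡ|². -/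
/-!
Write `R₁(S) = ∑ₑ [e ⊆ S]` and `R₂(S) = ∑_f [f ∩ S = ∅]`, sums over the edges. For disjoint `s`
and `t`, a uniformly random `k`-subset `S` of an `N`-set contains `s` and avoids `t` with
probability `k^{(|s|)} (N - k)^{(|t|)} / N^{(|s| + |t|)}` (falling factorials). Hence
`E R₁ = |Ḡ| p₁`, `E R₂ = |Ḡ| q₁`, and `E (R₁ R₂) = f₁ D`, where `D` counts ordered pairs of
vertex-disjoint edges: a pair `(e, f)` with `e ⊆ S` and `f ∩ S = ∅` is impossible when `e` and
`f` meet. The pairs that do meet are the `|Ḡ|` pairs `(e, e)` together with, for each vertex `i`,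
the `deg i (deg i - 1)` ordered pairs of distinct edges through `i`.
-/

open Finset MeasureTheory
open scoped BigOperators Classical

noncomputable section

theorem Nat.choose_sub_sub_mul_descFactorial_add {N k a b : ℕ} (hak : a ≤ k) (hkN : k ≤ N)
    (hab : a + b ≤ N) :
    (N - b - a).choose (k - a) * N.descFactorial (a + b)
      = N.choose k * (k.descFactorial a * (N - k).descFactorial b) := by
  rcases lt_or_ge (N - k) b with hbk | hbk
  · rw [Nat.choose_eq_zero_of_lt (by omega), (Nat.descFactorial_eq_zero_iff_lt).2 hbk]
    simp
  have hchoose := Nat.choose_mul_factorial_mul_factorial (show k - a ≤ N - b - a by omega)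
  rw [show N - b - a - (k - a) = N - k - b by omega] at hchoose
  have hN := Nat.factorial_mul_descFactorial hab
  rw [show N - (a + b) = N - b - a by omega] at hN
  have hk := Nat.factorial_mul_descFactorial hak
  have hNk := Nat.factorial_mul_descFactorial hbk
  -- after multiplying by `(k - a)! (N - k - b)!`, both sides become `N!`
  refine Nat.eq_of_mul_eq_mul_right (Nat.mul_pos (k - a).factorial_pos (N - k - b).factorial_pos) ?_
  calc _ = (N - b - a).choose (k - a) * (k - a).factorial * (N - k - b).factorial
            * N.descFactorial (a + b) := by ring
    _ = N.choose k * k.factorial * (N - k).factorial := by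
          rw [hchoose, hN, Nat.choose_mul_factorial_mul_factorial hkN]
    _ = _ := by rw [← hk, ← hNk]; ring

theorem Nat.cast_descFactorial_four {S : Type*} [Ring S] (a : ℕ) :
    (a.descFactorial 4 : S) = a * (a - 1) * (a - 2) * (a - 3) := by
  rw [← Nat.descFactorial_mul_descFactorial (show 2 ≤ 4 by norm_num), Nat.cast_mul,
    Nat.cast_descFactorial_two, Nat.cast_descFactorial_two]
  rcases le_or_gt 2 a with h | h
  · push_cast [Nat.cast_sub h]
    noncomm_ring
  · interval_cases a <;> simp

section UniformSubset

variable {α : Type*} [Fintype α]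

theorem card_filter_powersetCard_univ_subset_disjoint [DecidableEq α] {s t : Finset α}
    (hst : Disjoint s t) {k : ℕ} (hsk : #s ≤ k) :
    #{S ∈ powersetCard k (univ : Finset α) | s ⊆ S ∧ Disjoint t S}
      = (Fintype.card α - #t - #s).choose (k - #s) := by
  have hfilter : {S ∈ powersetCard k (univ : Finset α) | s ⊆ S ∧ Disjoint t S}
      = {S ∈ powersetCard k tᶜ | s ⊆ S} := by
    ext S
    simp only [mem_filter, mem_powersetCard, subset_univ, true_and, subset_compl_iff_disjoint_left]
    tauto
  rw [hfilter, card_filter_powersetCard_subset s tᶜ k (subset_compl_iff_disjoint_right.2 hst) hsk,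
    card_compl]

theorem card_filter_powersetCard_univ_subset_disjoint_div_choose [DecidableEq α] {s t : Finset α}
    (hst : Disjoint s t) {k : ℕ} (hk : k ≤ Fintype.card α) :
    (#{S ∈ powersetCard k (univ : Finset α) | s ⊆ S ∧ Disjoint t S} : ℝ) / (Fintype.card α).choose k
      = k.descFactorial #s * (Fintype.card α - k).descFactorial #t
        / (Fintype.card α).descFactorial (#s + #t) := by
  rcases lt_or_ge k #s with hks | hsk
  · have hempty : {S ∈ powersetCard k (univ : Finset α) | s ⊆ S ∧ Disjoint t S} = ∅ :=
      filter_eq_empty_iff.2 fun S hS hsS =>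
        hks.not_ge ((card_le_card hsS.1).trans (mem_powersetCard.1 hS).2.le)
    simp [hempty, (Nat.descFactorial_eq_zero_iff_lt).2 hks]
  have hcard : #s + #t ≤ Fintype.card α := card_union_of_disjoint hst ▸ card_le_univ _
  rw [card_filter_powersetCard_univ_subset_disjoint hst hsk, div_eq_div_iff
    (by exact_mod_cast (Nat.choose_pos hk).ne')
    (by exact_mod_cast (Nat.descFactorial_eq_zero_iff_lt).not.2 hcard.not_gt),
    mul_comm _ ((Fintype.card α).choose k : ℝ)]
  exact_mod_cast Nat.choose_sub_sub_mul_descFactorial_add hsk hk hcard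

def uniformSubsetMean (k : ℕ) (f : Finset α → ℝ) : ℝ :=
  (∑ S ∈ powersetCard k (univ : Finset α), f S) / (Fintype.card α).choose k

theorem uniformSubsetMean_sum {ι : Type*} (I : Finset ι) (k : ℕ) (f : ι → Finset α → ℝ) :
    uniformSubsetMean k (fun S => ∑ i ∈ I, f i S) = ∑ i ∈ I, uniformSubsetMean k (f i) := by
  simp only [uniformSubsetMean, sum_comm (s := powersetCard k _), sum_div]

theorem uniformSubsetMean_sub_mean_mul_sub_mean {k : ℕ} (hk : k ≤ Fintype.card α)
    (f g : Finset α → ℝ) :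
    uniformSubsetMean k (fun S => (f S - uniformSubsetMean k f) * (g S - uniformSubsetMean k g))
      = uniformSubsetMean k (fun S => f S * g S)
        - uniformSubsetMean k f * uniformSubsetMean k g := by
  have hchoose : ((Fintype.card α).choose k : ℝ) ≠ 0 := by exact_mod_cast (Nat.choose_pos hk).ne'
  simp only [uniformSubsetMean, sub_mul, mul_sub, sum_sub_distrib, ← sum_mul, ← mul_sum,
    sum_const, card_powersetCard, card_univ, nsmul_eq_mul]
  field_simp
  ring

theorem uniformSubsetMean_ite_subset_and_disjoint [DecidableEq α] {s t : Finset α}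
    (hst : Disjoint s t) {k : ℕ} (hk : k ≤ Fintype.card α) :
    uniformSubsetMean k (fun S => if s ⊆ S ∧ Disjoint t S then 1 else 0)
      = k.descFactorial #s * (Fintype.card α - k).descFactorial #t
        / (Fintype.card α).descFactorial (#s + #t) := by
  rw [uniformSubsetMean, sum_boole, card_filter_powersetCard_univ_subset_disjoint_div_choose hst hk]

theorem uniformSubsetMean_ite_subset [DecidableEq α] (s : Finset α) {k : ℕ}
    (hk : k ≤ Fintype.card α) :
    uniformSubsetMean k (fun S => if s ⊆ S then 1 else 0)
      = k.descFactorial #s / (Fintype.card α).descFactorial #s := by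
  simpa using uniformSubsetMean_ite_subset_and_disjoint (disjoint_empty_right s) hk

theorem uniformSubsetMean_ite_disjoint [DecidableEq α] (t : Finset α) {k : ℕ}
    (hk : k ≤ Fintype.card α) :
    uniformSubsetMean k (fun S => if Disjoint t S then 1 else 0)
      = (Fintype.card α - k).descFactorial #t / (Fintype.card α).descFactorial #t := by
  simpa using uniformSubsetMean_ite_subset_and_disjoint (disjoint_empty_left t) hk

end UniformSubset

namespace SimpleGraph

variable {α : Type*} [Fintype α] [DecidableEq α] (G : SimpleGraph α) [DecidableRel G.Adj]

theorem filter_edgeFinset_product_not_disjoint :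
    {p ∈ G.edgeFinset ×ˢ G.edgeFinset | ¬Disjoint p.1.toFinset p.2.toFinset}
      = G.edgeFinset.diag ∪ univ.biUnion fun v => (G.incidenceFinset v).offDiag := by
  ext ⟨e, f⟩
  simp only [mem_filter, mem_product, not_disjoint_iff, Sym2.mem_toFinset, mem_union, mem_diag,
    mem_biUnion, mem_univ, true_and, mem_offDiag, mem_incidenceFinset, incidenceSet,
    Set.mem_ofPred_eq, mem_edgeFinset]
  constructor
  · rintro ⟨⟨he, hf⟩, v, hve, hvf⟩
    by_cases hef : e = f
    · exact .inl ⟨he, hef⟩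
    · exact .inr ⟨v, ⟨he, hve⟩, ⟨hf, hvf⟩, hef⟩
  · rintro (⟨he, rfl⟩ | ⟨v, ⟨he, hve⟩, ⟨hf, hvf⟩, -⟩)
    · exact ⟨⟨he, he⟩, _, Sym2.out_fst_mem e, Sym2.out_fst_mem e⟩
    · exact ⟨⟨he, hf⟩, v, hve, hvf⟩

theorem card_filter_edgeFinset_product_not_disjoint :
    #{p ∈ G.edgeFinset ×ˢ G.edgeFinset | ¬Disjoint p.1.toFinset p.2.toFinset}
      = #G.edgeFinset + ∑ v, G.degree v * (G.degree v - 1) := by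
  have hdiag :
      Disjoint G.edgeFinset.diag (univ.biUnion fun v => (G.incidenceFinset v).offDiag) := by
    rw [Finset.disjoint_left]
    rintro p hp hp'
    obtain ⟨v, -, hne⟩ := mem_biUnion.1 hp'
    exact (mem_offDiag.1 hne).2.2 (mem_diag.1 hp).2
  -- two distinct edges share at most one vertex
  have hpairwise : ((univ : Finset α) : Set α).PairwiseDisjoint
      fun v => (G.incidenceFinset v).offDiag := by
    intro v _ w _ hvw
    simp only [Function.onFun, Finset.disjoint_left, mem_offDiag, mem_incidenceFinset, incidenceSet,
      Set.mem_ofPred_eq]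
    rintro ⟨e, f⟩ ⟨⟨-, hve⟩, ⟨-, hvf⟩, hef⟩ ⟨⟨-, hwe⟩, ⟨-, hwf⟩, -⟩
    exact hef (((Sym2.mem_and_mem_iff hvw).1 ⟨hve, hwe⟩).trans
      ((Sym2.mem_and_mem_iff hvw).1 ⟨hvf, hwf⟩).symm)
  rw [filter_edgeFinset_product_not_disjoint, card_union_of_disjoint hdiag, diag_card,
    card_biUnion hpairwise]
  simp only [offDiag_card, card_incidenceFinset_eq_degree, Nat.mul_sub_one]

theorem card_filter_edgeFinset_product_disjoint :
    (#{p ∈ G.edgeFinset ×ˢ G.edgeFinset | Disjoint p.1.toFinset p.2.toFinset} : ℝ)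
      = #G.edgeFinset ^ 2 - #G.edgeFinset - ∑ v, (G.degree v : ℝ) * (G.degree v - 1) := by
  have hsplit := card_filter_add_card_filter_not (s := G.edgeFinset ×ˢ G.edgeFinset)
    fun p => Disjoint p.1.toFinset p.2.toFinset
  rw [card_filter_edgeFinset_product_not_disjoint, card_product] at hsplit
  have hdeg (v : α) :
      ((G.degree v * (G.degree v - 1) : ℕ) : ℝ) = G.degree v * (G.degree v - 1) := by
    rcases (G.degree v).eq_zero_or_pos with h | h <;> simp [h, Nat.cast_pred]
  have hsplitR : (#{p ∈ G.edgeFinset ×ˢ G.edgeFinset | Disjoint p.1.toFinset p.2.toFinset} : ℝ)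
      + (#G.edgeFinset + ∑ v, ((G.degree v * (G.degree v - 1) : ℕ) : ℝ))
      = #G.edgeFinset * #G.edgeFinset := by exact_mod_cast hsplit
  simp only [hdeg] at hsplitR
  linear_combination hsplitR

theorem uniformSubsetMean_card_edges_subset {k : ℕ} (hk : k ≤ Fintype.card α) :
    uniformSubsetMean k (fun S => (#{e ∈ G.edgeFinset | e.toFinset ⊆ S} : ℝ))
      = #G.edgeFinset * (k.descFactorial 2 / (Fintype.card α).descFactorial 2) := by
  simp only [natCast_card_filter, uniformSubsetMean_sum]
  rw [sum_congr rfl fun e he => by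
    rw [uniformSubsetMean_ite_subset _ hk, G.card_toFinset_mem_edgeFinset ⟨_, he⟩],
    sum_const, nsmul_eq_mul]

theorem uniformSubsetMean_card_edges_disjoint {k : ℕ} (hk : k ≤ Fintype.card α) :
    uniformSubsetMean k (fun S => (#{e ∈ G.edgeFinset | Disjoint e.toFinset S} : ℝ))
      = #G.edgeFinset
        * ((Fintype.card α - k).descFactorial 2 / (Fintype.card α).descFactorial 2) := by
  simp only [natCast_card_filter, uniformSubsetMean_sum]
  rw [sum_congr rfl fun e he => by
    rw [uniformSubsetMean_ite_disjoint _ hk, G.card_toFinset_mem_edgeFinset ⟨_, he⟩],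
    sum_const, nsmul_eq_mul]

theorem uniformSubsetMean_card_edges_subset_mul_disjoint {k : ℕ} (hk : k ≤ Fintype.card α) :
    uniformSubsetMean k (fun S => (#{e ∈ G.edgeFinset | e.toFinset ⊆ S} : ℝ)
        * (#{e ∈ G.edgeFinset | Disjoint e.toFinset S} : ℝ))
      = #{p ∈ G.edgeFinset ×ˢ G.edgeFinset | Disjoint p.1.toFinset p.2.toFinset}
        * (k.descFactorial 2 * (Fintype.card α - k).descFactorial 2
          / (Fintype.card α).descFactorial 4) := by
  simp only [natCast_card_filter _ G.edgeFinset, sum_mul_sum, ← sum_product',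
    ite_zero_mul_ite_zero, mul_one, uniformSubsetMean_sum]
  have hterm (p : Sym2 α × Sym2 α) (hp : p ∈ G.edgeFinset ×ˢ G.edgeFinset) :
      uniformSubsetMean k (fun S => if p.1.toFinset ⊆ S ∧ Disjoint p.2.toFinset S then 1 else 0)
        = if Disjoint p.1.toFinset p.2.toFinset then
            (k.descFactorial 2 * (Fintype.card α - k).descFactorial 2
              / (Fintype.card α).descFactorial 4 : ℝ) else 0 := by
    obtain ⟨he, hf⟩ := mem_product.1 hp
    split_ifs with hdisj
    · rw [uniformSubsetMean_ite_subset_and_disjoint hdisj hk,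
        G.card_toFinset_mem_edgeFinset ⟨_, he⟩, G.card_toFinset_mem_edgeFinset ⟨_, hf⟩]
    · -- an edge inside `S` and an edge outside `S` cannot meet
      have hzero (S : Finset α) : ¬(p.1.toFinset ⊆ S ∧ Disjoint p.2.toFinset S) := fun h =>
        hdisj (h.2.symm.mono_left h.1)
      simp [uniformSubsetMean, hzero]
  rw [sum_congr rfl hterm, ← sum_filter, sum_const, nsmul_eq_mul]

end SimpleGraph

theorem covariance_R1u_R2u_general
    -- total sample size
    (N : ℕ)
    -- sizes of sample 1 and sample 2
    (n₁ n₂ : ℕ) (hn₁' : n₁ ≤ N - 1) (hn₂ : n₂ = N - n₁)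
    -- expectation under the permutation null distribution (uniform over
    -- all `n₁`-element subsets of `Fin N`)
    (E : (Finset (Fin N) → ℝ) → ℝ)
    (hE : ∀ f, E f =
      (∑ S ∈ Finset.powersetCard n₁ (Finset.univ : Finset (Fin N)), f S) / (N.choose n₁ : ℝ))
    -- the union graph Ḡ on the observations
    (Gbar : SimpleGraph (Fin N))
    -- the union statistics: edge-counts within sample 1 and within sample 2
    (R1u : Finset (Fin N) → ℝ)
    (hR1u : ∀ S, R1u S =
      ((Gbar.edgeFinset.filter (fun e => ∀ x ∈ e, x ∈ S)).card : ℝ))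
    (R2u : Finset (Fin N) → ℝ)
    (hR2u : ∀ S, R2u S =
      ((Gbar.edgeFinset.filter (fun e => ∀ x ∈ e, x ∉ S)).card : ℝ))
    -- covariance under the permutation null distribution
    (Cov : (Finset (Fin N) → ℝ) → (Finset (Fin N) → ℝ) → ℝ)
    (hCov : ∀ f g, Cov f g = E (fun S => (f S - E f) * (g S - E g)))
    -- the constants p₁, q₁ and f₁
    (p₁ q₁ f₁ : ℝ)
    (hp₁ : p₁ = (n₁ : ℝ) * ((n₁ : ℝ) - 1) / ((N : ℝ) * ((N : ℝ) - 1)))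
    (hq₁ : q₁ = (n₂ : ℝ) * ((n₂ : ℝ) - 1) / ((N : ℝ) * ((N : ℝ) - 1)))
    (hf₁ : f₁ = (n₁ : ℝ) * ((n₁ : ℝ) - 1) * (n₂ : ℝ) * ((n₂ : ℝ) - 1) /
      ((N : ℝ) * ((N : ℝ) - 1) * ((N : ℝ) - 2) * ((N : ℝ) - 3))) :
    Cov R1u R2u = f₁ * ((Gbar.edgeFinset.card : ℝ) ^ 2 - (Gbar.edgeFinset.card : ℝ)
        - (∑ i, (Gbar.degree i : ℝ) * ((Gbar.degree i : ℝ) - 1)))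
      - p₁ * q₁ * (Gbar.edgeFinset.card : ℝ) ^ 2 := by
  have hk : n₁ ≤ Fintype.card (Fin N) := by rw [Fintype.card_fin]; omega
  obtain rfl : E = uniformSubsetMean n₁ :=
    funext fun f => by rw [hE, uniformSubsetMean, Fintype.card_fin]
  obtain rfl : R1u = fun S => (#{e ∈ Gbar.edgeFinset | e.toFinset ⊆ S} : ℝ) :=
    funext fun S => by simp only [hR1u, subset_iff, Sym2.mem_toFinset]
  obtain rfl : R2u = fun S => (#{e ∈ Gbar.edgeFinset | Disjoint e.toFinset S} : ℝ) :=
    funext fun S => by simp only [hR2u, Finset.disjoint_left, Sym2.mem_toFinset]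
  rw [hCov, uniformSubsetMean_sub_mean_mul_sub_mean hk,
    Gbar.uniformSubsetMean_card_edges_subset_mul_disjoint hk,
    Gbar.uniformSubsetMean_card_edges_subset hk, Gbar.uniformSubsetMean_card_edges_disjoint hk,
    Gbar.card_filter_edgeFinset_product_disjoint, hp₁, hq₁, hf₁, hn₂]
  simp only [Fintype.card_fin, Nat.cast_descFactorial_two, Nat.cast_descFactorial_four]
  ring

/-- **part of Lemma 5 of the paper.**  Covariance of the union
within-sample edge-counts under the permutation null distribution. -/
theorem covariance_R1u_R2u
    -- number of distinct values and multiplicities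
    (K : ℕ) (hK : 1 ≤ K) (m : Fin K → ℕ) (hm : ∀ u, 1 ≤ m u)
    -- total sample size
    (N : ℕ) (hN : N = ∑ u, m u) (hNge : 4 ≤ N)
    -- value map with prescribed fiber sizes
    (v : Fin N → Fin K)
    (hv : ∀ u, (Finset.univ.filter (fun i => v i = u)).card = m u)
    -- similarity graph on the distinct values
    (C₀ : SimpleGraph (Fin K))
    -- sizes of sample 1 and sample 2
    (n₁ n₂ : ℕ) (hn₁ : 1 ≤ n₁) (hn₁' : n₁ ≤ N - 1) (hn₂ : n₂ = N - n₁)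
    -- expectation under the permutation null distribution (uniform over
    -- all `n₁`-element subsets of `Fin N`)
    (E : (Finset (Fin N) → ℝ) → ℝ)
    (hE : ∀ f, E f =
      (∑ S ∈ Finset.powersetCard n₁ (Finset.univ : Finset (Fin N)), f S) / (N.choose n₁ : ℝ))
    -- the union graph Ḡ on the observations
    (Gbar : SimpleGraph (Fin N))
    (hGbar : ∀ i j, Gbar.Adj i j ↔ i ≠ j ∧ (v i = v j ∨ C₀.Adj (v i) (v j)))
    -- the union statistics: edge-counts within sample 1 and within sample 2
    (R1u : Finset (Fin N) → ℝ)
    (hR1u : ∀ S, R1u S =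
      ((Gbar.edgeFinset.filter (fun e => ∀ x ∈ e, x ∈ S)).card : ℝ))
    (R2u : Finset (Fin N) → ℝ)
    (hR2u : ∀ S, R2u S =
      ((Gbar.edgeFinset.filter (fun e => ∀ x ∈ e, x ∉ S)).card : ℝ))
    -- covariance under the permutation null distribution
    (Cov : (Finset (Fin N) → ℝ) → (Finset (Fin N) → ℝ) → ℝ)
    (hCov : ∀ f g, Cov f g = E (fun S => (f S - E f) * (g S - E g)))
    -- the constants p₁, q₁ and f₁
    (p₁ q₁ f₁ : ℝ)
    (hp₁ : p₁ = (n₁ : ℝ) * ((n₁ : ℝ) - 1) / ((N : ℝ) * ((N : ℝ) - 1)))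
    (hq₁ : q₁ = (n₂ : ℝ) * ((n₂ : ℝ) - 1) / ((N : ℝ) * ((N : ℝ) - 1)))
    (hf₁ : f₁ = (n₁ : ℝ) * ((n₁ : ℝ) - 1) * (n₂ : ℝ) * ((n₂ : ℝ) - 1) /
      ((N : ℝ) * ((N : ℝ) - 1) * ((N : ℝ) - 2) * ((N : ℝ) - 3))) :
    Cov R1u R2u = f₁ * ((Gbar.edgeFinset.card : ℝ) ^ 2 - (Gbar.edgeFinset.card : ℝ)
        - (∑ i, (Gbar.degree i : ℝ) * ((Gbar.degree i : ℝ) - 1)))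
      - p₁ * q₁ * (Gbar.edgeFinset.card : ℝ) ^ 2 :=
  covariance_R1u_R2u_general N n₁ n₂ hn₁' hn₂ E hE Gbar R1u hR1u R2u hR2u Cov hCov p₁ q₁ f₁ hp₁ hq₁
    hf₁
end
end
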